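/- Let $r \geq 1$ and let $s$ be the unique natural number with $2^{s-1} \leq r < 2^s$. Suppose $m+1$ is divisible by $2^s$. Then for all $1 \leq i \leq r$ and all $0 \leq j \leq m+1-i$ with $j$ divisible by $2^s$, the binomial coefficient $\binom{m+1-j}{i}$ is even. -/

import Mathlib

/-- From `N * (N-1).choose (i-1) = N.choose i * i`: if `p ∤ N.choose i` then `p ^ s ∣ i`,
which is impossible for `0 < i < p ^ s`. -/
theorem Nat.Prime.dvd_choose_of_pow_dvd {p s N i : ℕ} (hp : p.Prime) (hN : p ^ s ∣ N)
    (hi₀ : 0 < i) (hi : i < p ^ s) : p ∣ N.choose i := by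
  obtain ⟨k, rfl⟩ := Nat.exists_eq_add_one_of_ne_zero hi₀.ne'
  rcases N with _ | n
  · simp
  by_contra hpC
  have hdvd : p ^ s ∣ (n + 1).choose (k + 1) * (k + 1) :=
    Nat.add_one_mul_choose_eq n k ▸ hN.mul_right _
  have hcop : Nat.Coprime (p ^ s) ((n + 1).choose (k + 1)) :=
    (hp.coprime_iff_not_dvd.2 hpC).pow_left s
  exact absurd (Nat.le_of_dvd hi₀ (hcop.dvd_of_dvd_mul_left hdvd)) (not_le.2 hi)

theorem stmt_3_general (r s m : ℕ)
    (hs2 : r < 2 ^ s)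
    (hm : 2 ^ s ∣ m + 1) :
    ∀ i, 1 ≤ i → i ≤ r → ∀ j, j ≤ m + 1 - i → 2 ^ s ∣ j →
      Even ((m + 1 - j).choose i) := by
  intro i hi₁ hir j _ hj
  exact even_iff_two_dvd.2 <|
    Nat.prime_two.dvd_choose_of_pow_dvd (Nat.dvd_sub hm hj) hi₁ (by omega)

/-- If `r ≥ 1`, `2^(s-1) ≤ r < 2^s` and `2^s ∣ m+1`, then for all
`1 ≤ i ≤ r` and all `j ≤ m+1-i` divisible by `2^s`, the binomial coefficient
`(m+1-j).choose i` is even. -/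
theorem stmt_3 (r s m : ℕ) (hr : 1 ≤ r)
    (hs1 : 2 ^ (s - 1) ≤ r) (hs2 : r < 2 ^ s)
    (hm : 2 ^ s ∣ m + 1) :
    ∀ i, 1 ≤ i → i ≤ r → ∀ j, j ≤ m + 1 - i → 2 ^ s ∣ j →
      Even ((m + 1 - j).choose i) :=
  stmt_3_general r s m hs2 hm
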